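/- Let 1 < p < ∞, let f be a pdf on ℝⁿ with f ∈ L^p(ℝⁿ), and let g ∈ C₀(ℝⁿ) be a pdf. Then for every ε > 0 there exists a finite mixture h = Σᵢ₌₁ᵐ cᵢ σᵢ⁻ⁿ g((x − μᵢ)/σᵢ) with cᵢ ≥ 0, Σ cᵢ = 1, such that ‖f − h‖_{L^p} < ε. -/

import Mathlib

/-!
Write `g_σ(x) = σ⁻ⁿ g(x/σ)`. Since `g_σ` is a probability density, Jensen's inequality for
`t ↦ tᵖ` and Tonelli give `‖f - f ∗ g_σ‖ₚᵖ ≤ ∫ g(z) ‖f - f(· - σz)‖ₚᵖ dz`, which tends to `0`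
with `σ` by continuity of translation in `Lᵖ` and dominated convergence.
Replacing `y` by `T y` in `(f ∗ g_σ)(x) = ∫ f(y) g_σ(x - y) dy`, for a simple function `T`, turns
the convolution into the mixture `∑ᵥ c_v g_σ(x - v)` with weights `c_v = ∫_{T⁻¹{v}} f`. The same
Jensen–Tonelli bound, now with `f` as the density, gives
`‖f ∗ g_σ - ∑ᵥ c_v g_σ(· - v)‖ₚᵖ ≤ ∫ f(y) ‖g_σ - g_σ(· - (T y - y))‖ₚᵖ dy`, which is small
once `T` is close enough to the identity.
-/

open MeasureTheory Filter Function Module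
open scoped ENNReal Topology

section Jensen

variable {α β : Type*} [MeasurableSpace α] [MeasurableSpace β]

theorem ENNReal.rpow_lintegral_mul_le_lintegral_mul_rpow {ν : Measure β} {a h : β → ℝ≥0∞}
    (ha : AEMeasurable a ν) (hh : AEMeasurable h ν) (ha1 : ∫⁻ y, a y ∂ν ≤ 1)
    {r : ℝ} (hr : 1 ≤ r) :
    (∫⁻ y, a y * h y ∂ν) ^ r ≤ ∫⁻ y, a y * h y ^ r ∂ν := by
  have hr0 : 0 < r := by linarith
  have hsplit : ∀ y, a y * h y = (a y * h y ^ r) ^ r⁻¹ * a y ^ (1 - r⁻¹) := fun y => by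
    rw [ENNReal.mul_rpow_of_nonneg _ _ (by positivity), ENNReal.rpow_rpow_inv hr0.ne',
      mul_right_comm, ← ENNReal.rpow_add_of_nonneg _ _ (by positivity)
        (sub_nonneg.2 (inv_le_one_of_one_le₀ hr)), add_sub_cancel, ENNReal.rpow_one]
  have holder := ENNReal.lintegral_mul_norm_pow_le (f := fun y => a y * h y ^ r)
    (ha.mul (hh.pow_const r)) ha (inv_nonneg.2 hr0.le) (sub_nonneg.2 (inv_le_one_of_one_le₀ hr))
    (add_sub_cancel _ _)
  calc (∫⁻ y, a y * h y ∂ν) ^ r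
      = (∫⁻ y, (a y * h y ^ r) ^ r⁻¹ * a y ^ (1 - r⁻¹) ∂ν) ^ r := by
        rw [lintegral_congr fun y => hsplit y]
    _ ≤ ((∫⁻ y, a y * h y ^ r ∂ν) ^ r⁻¹ * (∫⁻ y, a y ∂ν) ^ (1 - r⁻¹)) ^ r := by gcongr
    _ ≤ ((∫⁻ y, a y * h y ^ r ∂ν) ^ r⁻¹ * 1) ^ r := by
        gcongr
        exact ENNReal.rpow_le_one ha1 (sub_nonneg.2 (inv_le_one_of_one_le₀ hr))
    _ = ∫⁻ y, a y * h y ^ r ∂ν := by rw [mul_one, ENNReal.rpow_inv_rpow hr0.ne']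

theorem eLpNorm_integral_mul_rpow_le_lintegral {μ : Measure α} {ν : Measure β} [SFinite μ]
    [SFinite ν] {p : ℝ≥0∞} (hp1 : 1 ≤ p) (hp : p ≠ ∞) {φ : β → ℝ} (hφ : AEStronglyMeasurable φ ν)
    (hφ1 : ∫⁻ y, ‖φ y‖ₑ ∂ν ≤ 1) {H : α → β → ℝ} (hH : AEStronglyMeasurable (uncurry H) (μ.prod ν)) :
    eLpNorm (fun x => ∫ y, φ y * H x y ∂ν) p μ ^ p.toReal
      ≤ ∫⁻ y, ‖φ y‖ₑ * eLpNorm (H · y) p μ ^ p.toReal ∂ν := by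
  have hp0 : p ≠ 0 := (zero_lt_one.trans_le hp1).ne'
  have hr : 1 ≤ p.toReal := by
    simpa using ENNReal.toReal_mono hp hp1
  have hr0 : 0 < p.toReal := by linarith
  have hpow : ∀ F : α → ℝ, eLpNorm F p μ ^ p.toReal = ∫⁻ x, ‖F x‖ₑ ^ p.toReal ∂μ := fun F => by
    rw [eLpNorm_eq_eLpNorm' hp0 hp, lintegral_rpow_enorm_eq_rpow_eLpNorm' hr0]
  calc eLpNorm (fun x => ∫ y, φ y * H x y ∂ν) p μ ^ p.toReal
      = ∫⁻ x, ‖∫ y, φ y * H x y ∂ν‖ₑ ^ p.toReal ∂μ := hpow _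
    _ ≤ ∫⁻ x, ∫⁻ y, ‖φ y‖ₑ * ‖H x y‖ₑ ^ p.toReal ∂ν ∂μ := by
        refine lintegral_mono_ae ?_
        filter_upwards [hH.prodMk_left] with x hx
        calc ‖∫ y, φ y * H x y ∂ν‖ₑ ^ p.toReal
            ≤ (∫⁻ y, ‖φ y‖ₑ * ‖H x y‖ₑ ∂ν) ^ p.toReal := by
              gcongr
              simpa only [enorm_mul] using enorm_integral_le_lintegral_enorm (fun y => φ y * H x y)
          _ ≤ _ := ENNReal.rpow_lintegral_mul_le_lintegral_mul_rpow hφ.enorm hx.enorm hφ1 hr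
    _ = ∫⁻ y, ∫⁻ x, ‖φ y‖ₑ * ‖H x y‖ₑ ^ p.toReal ∂μ ∂ν :=
        lintegral_lintegral_swap (hφ.comp_snd.enorm.mul (hH.enorm.pow_const _))
    _ = ∫⁻ y, ‖φ y‖ₑ * eLpNorm (H · y) p μ ^ p.toReal ∂ν := by
        refine lintegral_congr fun y => ?_
        rw [lintegral_const_mul' _ _ enorm_ne_top, hpow]

end Jensen

section Translation

variable {G F : Type*} [NormedAddCommGroup G] [MeasurableSpace G] [BorelSpace G] {μ : Measure G}
  [μ.IsAddRightInvariant] [NormedAddCommGroup F] {p : ℝ≥0∞}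

theorem eLpNorm_comp_sub_sub_comp_sub {f : G → F} (hf : AEStronglyMeasurable f μ) (a b : G) :
    eLpNorm (fun x => f (x - a) - f (x - b)) p μ
      = eLpNorm (fun x => f x - f (x - (b - a))) p μ := by
  have hg : AEStronglyMeasurable (fun x => f x - f (x - (b - a))) μ :=
    hf.sub (hf.comp_measurePreserving (measurePreserving_sub_right μ (b - a)))
  rw [← eLpNorm_comp_measurePreserving hg (measurePreserving_sub_right μ a)]
  congr 1 with x
  simp [sub_sub]

theorem eLpNorm_sub_comp_sub_le (hp1 : 1 ≤ p) {f : G → F} (hf : AEStronglyMeasurable f μ) (a : G) :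
    eLpNorm (fun x => f x - f (x - a)) p μ ≤ 2 * eLpNorm f p μ := by
  have hshift := measurePreserving_sub_right μ a
  calc eLpNorm (fun x => f x - f (x - a)) p μ
      ≤ eLpNorm f p μ + eLpNorm (f ∘ fun x => x - a) p μ :=
        eLpNorm_sub_le hf (hf.comp_measurePreserving hshift) hp1
    _ = 2 * eLpNorm f p μ := by rw [eLpNorm_comp_measurePreserving hf hshift, two_mul]

theorem continuous_eLpNorm_sub_comp_sub [μ.InnerRegularCompactLTTop] [IsLocallyFiniteMeasure μ]
    [Fact (1 ≤ p)] (hp : p ≠ ∞) {f : G → F} (hf : MemLp f p μ) :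
    Continuous fun a => eLpNorm (fun x => f x - f (x - a)) p μ := by
  let shift : G → C(G, G) := (⟨fun w : G × G => w.2 - w.1, by fun_prop⟩ : C(G × G, G)).curry
  have hshift (a : G) : MeasurePreserving (shift a) μ μ := measurePreserving_sub_right μ a
  have hcont : Continuous fun a => hf.toLp f - Lp.compMeasurePreserving _ (hshift a) (hf.toLp f) :=
    continuous_const.sub (continuous_const.compMeasurePreservingLp
      (ContinuousMap.curry _).continuous hshift hp)
  refine (continuous_enorm.comp hcont).congr fun a => ?_
  rw [comp_apply, Lp.enorm_def]
  refine eLpNorm_congr_ae ?_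
  filter_upwards [Lp.coeFn_sub (hf.toLp f) (Lp.compMeasurePreserving _ (hshift a) (hf.toLp f)),
    hf.coeFn_toLp, Lp.coeFn_compMeasurePreserving (hf.toLp f) (hshift a),
    (hshift a).quasiMeasurePreserving.ae_eq_comp hf.coeFn_toLp] with x h1 h2 h3 h4
  rw [h1, Pi.sub_apply, h2, h3, h4]
  rfl

theorem tendsto_lintegral_mul_eLpNorm_sub_comp_sub [μ.InnerRegularCompactLTTop]
    [IsLocallyFiniteMeasure μ] [Fact (1 ≤ p)] (hp : p ≠ ∞) {f : G → F} (hf : MemLp f p μ)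
    {ι β : Type*} {l : Filter ι} [l.IsCountablyGenerated] [MeasurableSpace β] {ν : Measure β}
    {a : β → ℝ≥0∞} (ha : AEMeasurable a ν) (ha_fin : ∫⁻ y, a y ∂ν ≠ ∞) {u : ι → β → G}
    (hu : ∀ i, Measurable (u i)) (hu0 : ∀ y, Tendsto (fun i => u i y) l (𝓝 0)) :
    Tendsto (fun i => ∫⁻ y, a y * eLpNorm (fun x => f x - f (x - u i y)) p μ ^ p.toReal ∂ν)
      l (𝓝 0) := by
  have hw := continuous_eLpNorm_sub_comp_sub hp hf
  have hr : 0 < p.toReal := ENNReal.toReal_pos (zero_lt_one.trans_le Fact.out).ne' hp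
  have hC : (2 * eLpNorm f p μ) ^ p.toReal ≠ ∞ :=
    ENNReal.rpow_ne_top_of_nonneg hr.le (ENNReal.mul_ne_top (by simp) hf.eLpNorm_ne_top)
  have hlim := tendsto_lintegral_filter_of_dominated_convergence' (μ := ν) (l := l) (f := 0)
    (F := fun i y => a y * eLpNorm (fun x => f x - f (x - u i y)) p μ ^ p.toReal)
    (fun y => a y * (2 * eLpNorm f p μ) ^ p.toReal)
    (.of_forall fun i => ha.mul ((hw.measurable.comp (hu i)).pow_const _).aemeasurable)
    (.of_forall fun i => .of_forall fun y => by
      gcongr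
      exact eLpNorm_sub_comp_sub_le (Fact.out : 1 ≤ p) hf.1 _)
    (by rw [lintegral_mul_const' _ _ hC]; exact ENNReal.mul_ne_top ha_fin hC)
    (by
      filter_upwards [ae_lt_top' ha ha_fin] with y hy
      have hw0 : Tendsto (fun i => eLpNorm (fun x => f x - f (x - u i y)) p μ ^ p.toReal) l
          (𝓝 0) := by
        have := ((hw.tendsto 0).comp (hu0 y)).ennrpow_const p.toReal
        simpa [comp_def, ENNReal.zero_rpow_of_pos hr] using this
      simpa using ENNReal.Tendsto.const_mul hw0 (Or.inr hy.ne))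
  simpa using hlim

end Translation

theorem MeasureTheory.Integrable.memLp_of_bound {α F : Type*} [MeasurableSpace α] {μ : Measure α}
    [NormedAddCommGroup F] {f : α → F} (hf : Integrable f μ) {C : ℝ} (hC : ∀ x, ‖f x‖ ≤ C)
    {p : ℝ≥0∞} (hp1 : 1 ≤ p) : MemLp f p μ := by
  rcases eq_or_ne p ∞ with rfl | hp
  · exact memLp_top_of_bound hf.1 C (.of_forall hC)
  have hr : 1 ≤ p.toReal := by simpa using ENNReal.toReal_mono hp hp1
  refine (integrable_norm_rpow_iff hf.1 (zero_lt_one.trans_le hp1).ne' hp).1 ?_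
  refine (hf.norm.const_mul (C ^ (p.toReal - 1))).mono'
    (hf.1.norm.aemeasurable.pow_const _).aestronglyMeasurable (.of_forall fun x => ?_)
  have hsplit : ‖f x‖ ^ p.toReal = ‖f x‖ ^ (p.toReal - 1) * ‖f x‖ := by
    rw [← Real.rpow_add_one' (norm_nonneg _) (by linarith), sub_add_cancel]
  rw [Real.norm_of_nonneg (by positivity), hsplit]
  exact mul_le_mul_of_nonneg_right (Real.rpow_le_rpow (norm_nonneg _) (hC x) (by linarith))
    (norm_nonneg _)

theorem integral_mul_comp_simpleFunc {α β : Type*} [MeasurableSpace α] [MeasurableSpace β]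
    {μ : Measure α} {f : α → ℝ} (hf : Integrable f μ) (T : SimpleFunc α β) (h : β → ℝ) :
    ∫ y, f y * h (T y) ∂μ = ∑ v ∈ T.range, (∫ y in T ⁻¹' {v}, f y ∂μ) * h v := by
  have hpiece (y : α) :
      f y * h (T y) = ∑ v ∈ T.range, (T ⁻¹' {v}).indicator (fun y => f y * h v) y := by
    rw [Finset.sum_eq_single_of_mem (f := fun v => (T ⁻¹' {v}).indicator (fun y => f y * h v) y)
      (T y) (T.mem_range_self y)
      fun v _ hv => Set.indicator_of_notMem (s := T ⁻¹' {v}) (Ne.symm hv) _]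
    exact (Set.indicator_of_mem (s := T ⁻¹' {T y}) rfl (fun y => f y * h (T y))).symm
  simp_rw [hpiece]
  rw [integral_finsetSum _ fun v _ => (hf.mul_const _).indicator (T.measurableSet_preimage _)]
  refine Finset.sum_congr rfl fun v _ => ?_
  rw [integral_indicator (T.measurableSet_preimage _), integral_mul_const]

structure IsPDF {α : Type*} [MeasurableSpace α] (φ : α → ℝ) (μ : Measure α) : Prop where
  nonneg : 0 ≤ φ
  integrable : Integrable φ μ
  integral_eq_one : ∫ x, φ x ∂μ = 1

namespace IsPDF

variable {α : Type*} [MeasurableSpace α] {μ : Measure α} {φ : α → ℝ}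

theorem lintegral_enorm_eq_one (hφ : IsPDF φ μ) : ∫⁻ x, ‖φ x‖ₑ ∂μ = 1 := by
  rw [lintegral_enorm_of_nonneg hφ.nonneg, ← ofReal_integral_eq_lintegral_ofReal hφ.integrable
    (.of_forall hφ.nonneg), hφ.integral_eq_one, ENNReal.ofReal_one]

theorem exists_fin_integral_mul_comp_simpleFunc_eq_sum {β : Type*} [MeasurableSpace β]
    (hφ : IsPDF φ μ) (T : SimpleFunc α β) :
    ∃ (m : ℕ) (c : Fin m → ℝ) (v : Fin m → β), (∀ i, 0 ≤ c i) ∧ ∑ i, c i = 1 ∧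
      ∀ h : β → ℝ, ∫ y, φ y * h (T y) ∂μ = ∑ i, c i * h (v i) := by
  let e := T.range.equivFin
  have hreindex (F : β → ℝ) : ∑ i, F (e.symm i) = ∑ v ∈ T.range, F v := by
    rw [e.symm.sum_comp (fun v => F v), Finset.sum_coe_sort]
  refine ⟨T.range.card, fun i => ∫ y in T ⁻¹' {(e.symm i : β)}, φ y ∂μ, fun i => e.symm i,
    fun i => setIntegral_nonneg (T.measurableSet_preimage _) fun y _ => hφ.nonneg y, ?_,
    fun h => by rw [integral_mul_comp_simpleFunc hφ.integrable T h, ← hreindex]⟩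
  have htotal := integral_mul_comp_simpleFunc hφ.integrable T fun _ => 1
  simp only [mul_one, hφ.integral_eq_one] at htotal
  rw [htotal, ← hreindex]

end IsPDF

section LocationScale

variable {E : Type*} [NormedAddCommGroup E] [NormedSpace ℝ E]

noncomputable def scaledKernel (σ : ℝ) (g : E → ℝ) (x : E) : ℝ := (σ ^ finrank ℝ E)⁻¹ * g (σ⁻¹ • x)

theorem norm_scaledKernel_le {g : E → ℝ} {C : ℝ} (hC : ∀ x, ‖g x‖ ≤ C) {σ : ℝ} (hσ : 0 < σ)
    (x : E) : ‖scaledKernel σ g x‖ ≤ (σ ^ finrank ℝ E)⁻¹ * C := by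
  rw [scaledKernel, norm_mul, Real.norm_of_nonneg (by positivity)]
  exact mul_le_mul_of_nonneg_left (hC _) (by positivity)

variable [FiniteDimensional ℝ E] [MeasurableSpace E] [BorelSpace E] {μ : Measure E}
  [μ.IsAddHaarMeasure]

theorem isPDF_scaledKernel {g : E → ℝ} (hg : IsPDF g μ) {σ : ℝ} (hσ : 0 < σ) :
    IsPDF (scaledKernel σ g) μ where
  nonneg x := mul_nonneg (by positivity) (hg.nonneg _)
  integrable := (hg.integrable.comp_smul (inv_ne_zero hσ.ne')).const_mul _
  integral_eq_one := by
    simp only [scaledKernel]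
    rw [integral_const_mul, Measure.integral_comp_inv_smul_of_nonneg μ g hσ.le, smul_eq_mul,
      hg.integral_eq_one, mul_one, inv_mul_cancel₀ (by positivity)]

theorem lintegral_enorm_scaledKernel_mul {σ : ℝ} (hσ : 0 < σ) (g : E → ℝ) (F : E → ℝ≥0∞) :
    ∫⁻ u, ‖scaledKernel σ g u‖ₑ * F u ∂μ = ∫⁻ z, ‖g z‖ₑ * F (σ • z) ∂μ := by
  have hdil : ∫⁻ z, ‖g z‖ₑ * F (σ • z) ∂μ
      = ∫⁻ u, ‖g (σ⁻¹ • u)‖ₑ * F u ∂(μ.map (MeasurableEquiv.smul₀ σ hσ.ne')) := by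
    rw [lintegral_map_equiv]
    simp [inv_smul_smul₀ hσ.ne']
  rw [hdil, MeasurableEquiv.coe_smul₀, Measure.map_addHaar_smul μ hσ.ne', lintegral_smul_measure,
    smul_eq_mul, ← lintegral_const_mul' _ _ ENNReal.ofReal_ne_top]
  refine lintegral_congr fun u => ?_
  rw [scaledKernel, enorm_mul, ← ofReal_norm, Real.norm_eq_abs, mul_assoc]

variable {p : ℝ≥0∞} [Fact (1 ≤ p)]

theorem IsPDF.ae_sub_integral_mul_comp_sub_eq {k : E → ℝ} (hk : IsPDF k μ) {f : E → ℝ}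
    (hf : Integrable f μ) :
    ∀ᵐ x ∂μ, f x - ∫ y, f y * k (x - y) ∂μ = ∫ u, k u * (f x - f (x - u)) ∂μ := by
  filter_upwards [hk.integrable.ae_convolution_exists (ContinuousLinearMap.mul ℝ ℝ) hf] with x hx
  have hswap : ∫ y, f y * k (x - y) ∂μ = ∫ u, k u * f (x - u) ∂μ := by
    rw [← integral_sub_left_eq_self _ μ x]
    simp only [sub_sub_cancel, mul_comm]
  simp_rw [mul_sub]
  rw [integral_sub (hk.integrable.mul_const _) (by simpa [ConvolutionExistsAt] using hx),
    integral_mul_const, hk.integral_eq_one, one_mul, hswap]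

theorem IsPDF.tendsto_eLpNorm_sub_integral_mul_scaledKernel (hp : p ≠ ∞) {g : E → ℝ}
    (hg : IsPDF g μ) {f : E → ℝ} (hfp : MemLp f p μ) (hf : Integrable f μ) :
    Tendsto (fun σ => eLpNorm (fun x => f x - ∫ y, f y * scaledKernel σ g (x - y) ∂μ) p μ)
      (𝓝[>] 0) (𝓝 0) := by
  have hr : 0 < p.toReal := ENNReal.toReal_pos (zero_lt_one.trans_le Fact.out).ne' hp
  have hbound : ∀ σ > 0, eLpNorm (fun x => f x - ∫ y, f y * scaledKernel σ g (x - y) ∂μ) p μ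
      ≤ (∫⁻ z, ‖g z‖ₑ * eLpNorm (fun x => f x - f (x - σ • z)) p μ ^ p.toReal ∂μ)
          ^ p.toReal⁻¹ := by
    intro σ hσ
    have hk := isPDF_scaledKernel hg hσ
    rw [ENNReal.le_rpow_inv_iff hr, eLpNorm_congr_ae (hk.ae_sub_integral_mul_comp_sub_eq hf),
      ← lintegral_enorm_scaledKernel_mul hσ g
        fun u => eLpNorm (fun x => f x - f (x - u)) p μ ^ p.toReal]
    exact eLpNorm_integral_mul_rpow_le_lintegral Fact.out hp hk.integrable.1
      hk.lintegral_enorm_eq_one.le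
      (hf.1.comp_fst.sub (hf.1.comp_quasiMeasurePreserving (quasiMeasurePreserving_sub μ μ)))
  have hlim := (tendsto_lintegral_mul_eLpNorm_sub_comp_sub hp hfp hg.integrable.1.enorm
    hg.integrable.2.ne (l := 𝓝[>] (0 : ℝ)) (u := fun σ z => σ • z)
    (fun σ => measurable_const_smul σ) fun z => by
      simpa using ((tendsto_id (x := 𝓝 (0 : ℝ))).smul_const z).mono_left nhdsWithin_le_nhds
    ).ennrpow_const p.toReal⁻¹
  rw [ENNReal.zero_rpow_of_pos (inv_pos.2 hr)] at hlim
  exact tendsto_of_tendsto_of_tendsto_of_le_of_le' tendsto_const_nhds hlim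
    (.of_forall fun _ => zero_le) (eventually_nhdsWithin_of_forall hbound)

theorem IsPDF.exists_eLpNorm_integral_mul_comp_sub_sub_sum_lt (hp : p ≠ ∞) {f : E → ℝ}
    (hf : IsPDF f μ) {k : E → ℝ} (hkm : Measurable k) (hk : Integrable k μ) (hkp : MemLp k p μ)
    {ε : ℝ≥0∞} (hε : 0 < ε) :
    ∃ (m : ℕ) (c : Fin m → ℝ) (v : Fin m → E), (∀ i, 0 ≤ c i) ∧ ∑ i, c i = 1 ∧
      eLpNorm (fun x => ∫ y, f y * k (x - y) ∂μ - ∑ i, c i * k (x - v i)) p μ < ε := by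
  have hr : 0 < p.toReal := ENNReal.toReal_pos (zero_lt_one.trans_le Fact.out).ne' hp
  let T : ℕ → SimpleFunc E E := SimpleFunc.approxOn id measurable_id Set.univ 0 (Set.mem_univ 0)
  have hbound (n : ℕ) :
      eLpNorm (fun x => ∫ y, f y * k (x - y) ∂μ - ∫ y, f y * k (x - T n y) ∂μ) p μ ^ p.toReal
        ≤ ∫⁻ y, ‖f y‖ₑ * eLpNorm (fun x => k x - k (x - (T n y - y))) p μ ^ p.toReal ∂μ := by
    have hdiff : ∀ᵐ x ∂μ, ∫ y, f y * k (x - y) ∂μ - ∫ y, f y * k (x - T n y) ∂μ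
        = ∫ y, f y * (k (x - y) - k (x - T n y)) ∂μ := by
      filter_upwards [hf.integrable.ae_convolution_exists (ContinuousLinearMap.mul ℝ ℝ) hk]
        with x hx
      obtain ⟨C, hC⟩ := ((T n).map fun v => k (x - v)).exists_forall_norm_le
      simp_rw [mul_sub]
      rw [integral_sub (by simpa [ConvolutionExistsAt] using hx)
        (hf.integrable.mul_bdd ((T n).map fun v => k (x - v)).aestronglyMeasurable
          (.of_forall hC) : Integrable (fun y => f y * k (x - T n y)) μ)]
    rw [eLpNorm_congr_ae hdiff]
    refine (eLpNorm_integral_mul_rpow_le_lintegral Fact.out hp hf.integrable.1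
      hf.lintegral_enorm_eq_one.le ?_).trans_eq ?_
    · exact ((hkm.comp measurable_sub).sub (hkm.comp (measurable_fst.sub
        ((T n).measurable.comp measurable_snd)))).aestronglyMeasurable
    · refine lintegral_congr fun y => ?_
      rw [eLpNorm_comp_sub_sub_comp_sub hkm.aestronglyMeasurable]
  have hlim := tendsto_lintegral_mul_eLpNorm_sub_comp_sub hp hkp hf.integrable.1.enorm
    hf.integrable.2.ne (l := atTop) (u := fun n y => T n y - y)
    (fun n => (T n).measurable.sub measurable_id)
    fun y => by
      simpa using
        (SimpleFunc.tendsto_approxOn measurable_id (Set.mem_univ 0) (x := y) (by simp)).sub_const y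
  obtain ⟨n, hn⟩ := (hlim.eventually (gt_mem_nhds (ENNReal.rpow_pos_of_nonneg hε hr.le))).exists
  obtain ⟨m, c, v, hc0, hc1, hmix⟩ := hf.exists_fin_integral_mul_comp_simpleFunc_eq_sum (T n)
  refine ⟨m, c, v, hc0, hc1, ?_⟩
  have hM : (fun x => ∫ y, f y * k (x - y) ∂μ - ∑ i, c i * k (x - v i))
      = fun x => ∫ y, f y * k (x - y) ∂μ - ∫ y, f y * k (x - T n y) ∂μ :=
    funext fun x => by rw [hmix fun w => k (x - w)]
  rw [hM, ← ENNReal.rpow_lt_rpow_iff hr]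
  exact (hbound n).trans_lt hn

theorem IsPDF.exists_eLpNorm_sub_sum_scaledKernel_lt (hp : p ≠ ∞) {f g : E → ℝ}
    (hf : IsPDF f μ) (hfp : MemLp f p μ) (hg : IsPDF g μ) (hgm : Measurable g) {C : ℝ}
    (hC : ∀ x, ‖g x‖ ≤ C) {ε : ℝ≥0∞} (hε : 0 < ε) :
    ∃ σ > 0, ∃ (m : ℕ) (c : Fin m → ℝ) (v : Fin m → E), (∀ i, 0 ≤ c i) ∧ ∑ i, c i = 1 ∧
      eLpNorm (fun x => f x - ∑ i, c i * scaledKernel σ g (x - v i)) p μ < ε := by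
  have hε2 := ENNReal.half_pos hε.ne'
  obtain ⟨σ, hσε, hσ⟩ := (((hg.tendsto_eLpNorm_sub_integral_mul_scaledKernel hp hfp
    hf.integrable).eventually (gt_mem_nhds hε2)).and self_mem_nhdsWithin).exists
  set k := scaledKernel σ g
  have hk := isPDF_scaledKernel hg hσ
  have hkm : Measurable k := (hgm.comp (measurable_const_smul _)).const_mul _
  obtain ⟨m, c, v, hc0, hc1, hmix⟩ := hf.exists_eLpNorm_integral_mul_comp_sub_sub_sum_lt hp hkm
    hk.integrable (hk.integrable.memLp_of_bound (norm_scaledKernel_le hC hσ) Fact.out) hε2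
  refine ⟨σ, hσ, m, c, v, hc0, hc1, ?_⟩
  have hP : AEStronglyMeasurable (fun x => ∫ y, f y * k (x - y) ∂μ) μ :=
    (hf.integrable.1.comp_snd.mul
      (hkm.comp measurable_sub).aestronglyMeasurable).integral_prod_right'
  have hM : Measurable fun x => ∑ i, c i * k (x - v i) := by fun_prop
  calc eLpNorm (fun x => f x - ∑ i, c i * k (x - v i)) p μ
      = eLpNorm ((fun x => f x - ∫ y, f y * k (x - y) ∂μ) +
          fun x => ∫ y, f y * k (x - y) ∂μ - ∑ i, c i * k (x - v i)) p μ := by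
        simp only [Pi.add_def, sub_add_sub_cancel]
    _ ≤ _ := eLpNorm_add_le (hf.integrable.1.sub hP) (hP.sub hM.aestronglyMeasurable) Fact.out
    _ < ε / 2 + ε / 2 := ENNReal.add_lt_add hσε hmix
    _ = ε := ENNReal.add_halves ε

end LocationScale

/-- Theorem (c): if `1 < p < ∞`, `f` is a pdf in `L^p(ℝⁿ)`, and `g ∈ C₀(ℝⁿ)` is a pdf,
then for every `ε > 0` some finite location-scale mixture of `g` is within `ε` of `f`
in `L^p` norm. -/
theorem stmt_7 (n : ℕ) (p : ℝ) (hp : 1 < p) (f g : EuclideanSpace ℝ (Fin n) → ℝ)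
    (hf0 : ∀ x, 0 ≤ f x) (hfint : Integrable f) (hf1 : ∫ x, f x = 1)
    (hfp : MemLp f (ENNReal.ofReal p) volume)
    (hg0 : ∀ x, 0 ≤ g x) (hgint : Integrable g) (hg1 : ∫ x, g x = 1)
    (hgc : Continuous g)
    (hgC0 : Tendsto g (cocompact (EuclideanSpace ℝ (Fin n))) (𝓝 0))
    (ε : ℝ) (hε : 0 < ε) :
    ∃ (m : ℕ) (c : Fin m → ℝ) (μ : Fin m → EuclideanSpace ℝ (Fin n)) (σ : Fin m → ℝ),
      (∀ i, 0 < σ i) ∧ (∀ i, 0 ≤ c i) ∧ (∑ i, c i = 1) ∧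
      eLpNorm (fun x =>
          f x - ∑ i, c i * ((σ i) ^ n)⁻¹ * g ((σ i)⁻¹ • (x - μ i)))
        (ENNReal.ofReal p) volume < ENNReal.ofReal ε := by
  have : Fact (1 ≤ ENNReal.ofReal p) := ⟨ENNReal.one_le_ofReal.2 hp.le⟩
  obtain ⟨C, hC⟩ := isBounded_iff_forall_norm_le.1
    (⟨⟨g, hgc⟩, hgC0⟩ : ZeroAtInftyContinuousMap (EuclideanSpace ℝ (Fin n)) ℝ).isBounded_range
  obtain ⟨σ, hσ, m, c, v, hc0, hc1, hlt⟩ := IsPDF.exists_eLpNorm_sub_sum_scaledKernel_lt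
    ENNReal.ofReal_ne_top ⟨hf0, hfint, hf1⟩ hfp ⟨hg0, hgint, hg1⟩ hgc.measurable
    (fun x => hC _ (Set.mem_range_self x)) (ENNReal.ofReal_pos.2 hε)
  refine ⟨m, c, v, fun _ => σ, fun _ => hσ, hc0, hc1, ?_⟩
  simpa only [scaledKernel, finrank_euclideanSpace_fin, mul_assoc] using hlt
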